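/- arXiv:2106.03808 — 3 statements merged into one kernel-verified Lean document; each statement's English description precedes it below -/
import Mathlib

section
/- Let R_C > 0 and let Ω ⊆ ℂ be an open set which is a union of open balls of radius R_C. Then for every w in the frontier of Ω there exists a ∈ ℂ such that the open ball B(a, R_C) is contained in Ω and |a − w| = R_C (i.e., w lies on the boundary of that ball). -/
/-!
The centres `a` with `ball a r ⊆ Ω` form a closed set `A`, and `Ω` is the `r`-thickening of `A`.
In a proper space the closure of the `r`-thickening of a closed set is the union of the closed
balls of radius `r` about its points, so a frontier point `w` lies in some `closedBall a r` with
`a ∈ A`; as `Ω` is open (being a thickening), `w ∉ Ω ⊇ ball a r`, hence `dist a w = r`.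
-/

open Metric Complex

namespace Metric

variable {α : Type*} [PseudoMetricSpace α]

theorem isClosed_setOf_ball_subset (s : Set α) (r : ℝ) : IsClosed {a | ball a r ⊆ s} := by
  have h : {a | ball a r ⊆ s} = ⋂ x ∈ sᶜ, {a | r ≤ dist x a} := by
    ext a
    simp only [Set.mem_ofPred_eq, Set.mem_iInter, Set.mem_compl_iff, Set.subset_def, mem_ball,
      dist_comm _ a]
    exact forall_congr' fun x => by rw [← not_imp_not, not_lt]
  rw [h]
  exact isClosed_biInter fun _ _ =>
    isClosed_le continuous_const (continuous_const.dist continuous_id)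

theorem eq_thickening_setOf_ball_subset {s : Set α} {r : ℝ}
    (hs : ∀ z ∈ s, ∃ a, z ∈ ball a r ∧ ball a r ⊆ s) :
    s = thickening r {a | ball a r ⊆ s} := by
  rw [thickening_eq_biUnion_ball]
  refine subset_antisymm (fun z hz => ?_) (Set.iUnion₂_subset fun _ ha => ha)
  obtain ⟨a, hza, has⟩ := hs z hz
  exact Set.mem_biUnion has hza

theorem exists_ball_subset_dist_eq_of_mem_frontier [ProperSpace α] {s : Set α} {r : ℝ}
    (hr : 0 ≤ r) (hs : ∀ z ∈ s, ∃ a, z ∈ ball a r ∧ ball a r ⊆ s) {w : α}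
    (hw : w ∈ frontier s) : ∃ a, ball a r ⊆ s ∧ dist a w = r := by
  have hs_eq := eq_thickening_setOf_ball_subset hs
  have hw_closure : w ∈ cthickening r {a | ball a r ⊆ s} :=
    closure_thickening_subset_cthickening r _ (hs_eq ▸ hw.1)
  rw [(isClosed_setOf_ball_subset s r).cthickening_eq_biUnion_closedBall hr] at hw_closure
  obtain ⟨a, has, hwa⟩ := Set.mem_iUnion₂.mp hw_closure
  have hw_not_mem : w ∉ s := by
    have hs_open : IsOpen s := hs_eq ▸ isOpen_thickening
    simpa only [hs_open.interior_eq] using hw.2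
  have hle : dist a w ≤ r := by rwa [mem_closedBall, dist_comm] at hwa
  have hge : r ≤ dist a w :=
    not_lt.mp fun h => hw_not_mem (has (by rwa [mem_ball, dist_comm]))
  exact ⟨a, has, hle.antisymm hge⟩

end Metric

theorem stmt1_general (R_C : ℝ) (hC : 0 < R_C) (Ω : Set ℂ)
    (hunion : ∀ z ∈ Ω, ∃ a : ℂ, z ∈ ball a R_C ∧ ball a R_C ⊆ Ω) :
    ∀ w ∈ frontier Ω, ∃ a : ℂ, ball a R_C ⊆ Ω ∧ ‖a - w‖ = R_C := by
  intro w hw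
  simpa only [dist_eq] using exists_ball_subset_dist_eq_of_mem_frontier hC.le hunion hw

theorem stmt1 (R_C : ℝ) (hC : 0 < R_C) (Ω : Set ℂ) (hopen : IsOpen Ω)
    (hunion : ∀ z ∈ Ω, ∃ a : ℂ, z ∈ ball a R_C ∧ ball a R_C ⊆ Ω) :
    ∀ w ∈ frontier Ω, ∃ a : ℂ, ball a R_C ⊆ Ω ∧ ‖a - w‖ = R_C :=
  stmt1_general R_C hC Ω hunion
end

section
/- Given positive reals R_O, R_I, R_C with |R_I − R_C| ≤ R_O − R_C, there exists a bounded convex open set Ω ⊆ ℂ containing 0 such that Ω ⊆ closedBall(0, R_O), ball(0, R_I) ⊆ Ω, both R_O and −R_I (as real points of ℂ) lie in the frontier of Ω, and Ω is a union of open balls of radius R_C. Concretely, Ω = ⋃_{z ∈ K} ball(z, R_C) works, where K is the convex hull of ball(0, R_I − R_C) ∪ {R_O − R_C} if R_I > R_C, and K is the segment [R_C − R_I, R_O − R_C] ⊆ ℝ ⊆ ℂ otherwise. -/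
open Metric Complex

theorem stmt2 (R_O R_I R_C : ℝ) (hO : 0 < R_O) (hI : 0 < R_I) (hC : 0 < R_C)
    (h : |R_I - R_C| ≤ R_O - R_C) :
    ∃ Ω : Set ℂ, Bornology.IsBounded Ω ∧ Convex ℝ Ω ∧ IsOpen Ω ∧ (0 : ℂ) ∈ Ω ∧
      Ω ⊆ closedBall 0 R_O ∧ ball 0 R_I ⊆ Ω ∧
      ((R_O : ℂ) ∈ frontier Ω ∧ (-(R_I : ℝ) : ℂ) ∈ frontier Ω) ∧
      (∃ K : Set ℂ, Ω = ⋃ z ∈ K, ball z R_C) := by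
  have h1 : R_I - R_C ≤ R_O - R_C := (abs_le.mp h).2
  have h2 : R_C - R_I ≤ R_O - R_C := by
    have := (abs_le.mp h).1; linarith
  set K : Set ℂ :=
    convexHull ℝ (closedBall (0:ℂ) (R_I - R_C) ∪
      {((R_O - R_C : ℝ) : ℂ), ((R_C - R_I : ℝ) : ℂ)}) with hK
  set Ω : Set ℂ := ⋃ z ∈ K, ball z R_C with hΩdef
  have hΩthick : Ω = thickening R_C K := thickening_eq_biUnion_ball.symm
  have hKconv : Convex ℝ K := convex_convexHull ℝ _
  have hKbdd : Bornology.IsBounded K := by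
    rw [hK, isBounded_convexHull]
    exact (isBounded_closedBall).union (Set.toFinite _).isBounded
  have hmemO : ((R_O - R_C : ℝ) : ℂ) ∈ K :=
    subset_convexHull ℝ _ (Or.inr (Set.mem_insert _ _))
  have hmemI : ((R_C - R_I : ℝ) : ℂ) ∈ K :=
    subset_convexHull ℝ _ (Or.inr (Set.mem_insert_of_mem _ rfl))
  -- K ⊆ closedBall 0 (R_O - R_C)
  have hKsub : K ⊆ closedBall (0:ℂ) (R_O - R_C) := by
    rw [hK]
    refine convexHull_min ?_ (convex_closedBall _ _)
    have hnn : (0:ℝ) ≤ R_O - R_C := le_trans (abs_nonneg _) h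
    rintro z (hz | hz)
    · exact closedBall_subset_closedBall h1 hz
    · rcases hz with hz | hz <;> subst hz <;>
        simp only [mem_closedBall, dist_zero_right, Complex.norm_real, Real.norm_eq_abs,
          abs_le] <;> constructor <;> linarith
  -- K ⊆ halfspace re ≥ R_C - R_I
  have hKre : ∀ z ∈ K, R_C - R_I ≤ z.re := by
    intro z hz
    have : K ⊆ {z : ℂ | R_C - R_I ≤ z.re} := by
      rw [hK]
      refine convexHull_min ?_ (convex_halfSpace_re_ge _)
      rintro w (hw | hw)
      · simp only [mem_closedBall, dist_zero_right] at hw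
        have := neg_abs_le w.re
        have habs : |w.re| ≤ ‖w‖ := Complex.abs_re_le_norm w
        simp only [Set.mem_setOf_eq]
        nlinarith [abs_nonneg w.re]
      · rcases hw with hw | hw <;> subst hw <;>
          simp only [Set.mem_setOf_eq, Complex.ofReal_re]
        · exact h2
        · exact le_rfl
    exact this hz
  have hball_sub : ∀ z ∈ K, ball z R_C ⊆ Ω := fun z hz x hx =>
    Set.mem_biUnion hz hx
  have hΩopen : IsOpen Ω := hΩthick ▸ isOpen_thickening
  have hΩsubball : Ω ⊆ ball (0:ℂ) R_O := by
    intro x hx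
    simp only [hΩdef, Set.mem_iUnion, mem_ball, exists_prop] at hx
    obtain ⟨z, hzK, hxz⟩ := hx
    have hz0 : dist z 0 ≤ R_O - R_C := mem_closedBall.mp (hKsub hzK)
    have := dist_triangle x z 0
    simp only [mem_ball, dist_zero_right] at *
    linarith
  refine ⟨Ω, ?_, ?_, ?_, ?_, ?_, ?_, ⟨?_, ?_⟩, ⟨K, rfl⟩⟩
  · rw [hΩthick]; exact hKbdd.thickening
  · rw [hΩthick]; exact hKconv.thickening _
  · exact hΩopen
  · -- 0 ∈ Ω
    by_cases hIC : R_C ≤ R_I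
    · have h0K : (0:ℂ) ∈ K := subset_convexHull ℝ _ (Or.inl (by
        simp only [mem_closedBall, dist_self]; linarith))
      exact hball_sub 0 h0K (by simpa using hC)
    · push_neg at hIC
      refine hball_sub _ hmemI ?_
      simp only [mem_ball, dist_zero_left, Complex.norm_real, Real.norm_eq_abs]
      rw [_root_.abs_of_nonneg (by linarith)]; linarith
  · exact hΩsubball.trans ball_subset_closedBall
  · -- ball 0 R_I ⊆ Ω
    intro x hx
    simp only [mem_ball, dist_zero_right] at hx
    by_cases hxr : ‖x‖ ≤ R_I - R_C
    · have hxK : x ∈ K := subset_convexHull ℝ _ (Or.inl (by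
        simpa [mem_closedBall, dist_zero_right] using hxr))
      exact hball_sub x hxK (mem_ball_self hC)
    · push_neg at hxr
      by_cases hIC : R_C ≤ R_I
      · -- x ≠ 0, scale down
        have hx0 : x ≠ 0 := by
          intro h0; rw [h0, norm_zero] at hxr; linarith
        have hxn : (0:ℝ) < ‖x‖ := norm_pos_iff.mpr hx0
        set z : ℂ := ((R_I - R_C) / ‖x‖ : ℝ) • x with hz
        have hzK : z ∈ K := subset_convexHull ℝ _ (Or.inl (by
          simp only [mem_closedBall, dist_zero_right, hz, norm_smul,
            Real.norm_eq_abs, abs_div, abs_norm]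
          rw [_root_.abs_of_nonneg (by linarith), div_mul_cancel₀ _ hxn.ne']))
        refine hball_sub z hzK ?_
        simp only [mem_ball, dist_eq_norm, hz]
        have : x - ((R_I - R_C) / ‖x‖ : ℝ) • x = ((1 - (R_I - R_C) / ‖x‖ : ℝ)) • x := by
          rw [sub_smul, one_smul]
        rw [this, norm_smul, Real.norm_eq_abs]
        have hle1 : (R_I - R_C) / ‖x‖ ≤ 1 := by
          rw [div_le_one hxn]; linarith
        rw [_root_.abs_of_nonneg (by linarith), sub_mul, one_mul,
          div_mul_cancel₀ _ hxn.ne']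
        linarith
      · push_neg at hIC
        refine hball_sub _ hmemI ?_
        simp only [mem_ball]
        calc dist x ((R_C - R_I : ℝ) : ℂ) ≤ dist x 0 + dist 0 ((R_C - R_I : ℝ) : ℂ) :=
              dist_triangle _ _ _
          _ = ‖x‖ + |R_C - R_I| := by
              rw [dist_zero_right, dist_zero_left, Complex.norm_real, Real.norm_eq_abs]
          _ < R_C := by rw [_root_.abs_of_nonneg (by linarith)]; linarith
  · -- R_O ∈ frontier Ω
    rw [hΩopen.frontier_eq]
    constructor
    · -- in closure
      have : (R_O : ℂ) ∈ closedBall ((R_O - R_C : ℝ) : ℂ) R_C := by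
        simp only [mem_closedBall, dist_eq_norm]
        rw [← Complex.ofReal_sub]
        simp only [Complex.norm_real, Real.norm_eq_abs]
        rw [show R_O - (R_O - R_C) = R_C by ring, abs_of_pos hC]
      rw [← closure_ball _ hC.ne'] at this
      exact closure_mono (hball_sub _ hmemO) this
    · intro hmem
      have := hΩsubball hmem
      simp only [mem_ball, dist_zero_right, Complex.norm_real, Real.norm_eq_abs,
        abs_of_pos hO] at this
      exact lt_irrefl _ this
  · -- -R_I ∈ frontier Ω
    rw [hΩopen.frontier_eq]
    constructor
    · have : (-(R_I : ℝ) : ℂ) ∈ closedBall ((R_C - R_I : ℝ) : ℂ) R_C := by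
        simp only [mem_closedBall, dist_eq_norm, ← Complex.ofReal_neg, ← Complex.ofReal_sub,
          Complex.norm_real, Real.norm_eq_abs]
        rw [show -R_I - (R_C - R_I) = -R_C by ring, abs_neg, abs_of_pos hC]
      rw [← closure_ball _ hC.ne'] at this
      exact closure_mono (hball_sub _ hmemI) this
    · intro hmem
      have : (-(R_I:ℝ) : ℂ) ∈ Ω := hmem
      simp only [hΩdef, Set.mem_iUnion, mem_ball, exists_prop] at this
      obtain ⟨z, hzK, hdz⟩ := this
      have hre := hKre z hzK
      have : |((-(R_I:ℝ):ℂ) - z).re| ≤ ‖(-(R_I:ℝ):ℂ) - z‖ := Complex.abs_re_le_norm _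
      rw [dist_eq_norm] at hdz
      simp only [Complex.sub_re, Complex.neg_re, Complex.ofReal_re] at this
      have h3 : |(-R_I - z.re)| ≤ ‖(-(R_I:ℝ):ℂ) - z‖ := this
      have h4 : R_C ≤ -( -R_I - z.re) := by linarith
      have h5 : -(-R_I - z.re) ≤ |(-R_I - z.re)| := neg_le_abs _
      linarith
end

section
/- Let 0 ≤ a < r and define f : ℂ → ℂ on the unit disk by f(z) = r·((z − a/r)/(1 − (a/r)z)) + a. Then f maps the open unit disk conformally onto ball(a, r) ⊆ ℂ, f(0) = 0, and |f'(z)| ≤ r(r + a)/(r − a) for all z in the open unit disk, with the value r(r + a)/(r − a) attained as |f'(z)| → that value as z → 1 (indeed f extends holomorphically past z = 1 and |f'(1)| = r(r + a)/(r − a)). -/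
/-!
The map is `w ↦ r w + a` after the disk automorphism `φ_c z = (z - c) / (1 - c z)` with
`c = a / r`. The identity `|1 - c z|² - |z - c|² = (1 - c²)(1 - |z|²)` shows that `φ_c` maps the
disk into itself, with inverse `φ_{-c}`. Its derivative is `(1 - c²) / (1 - c z)²`, and
`|1 - c z| ≥ 1 - c` on the closed disk, with equality at `z = 1`, gives the sharp bound
`(1 + c) / (1 - c)`, which the affine map scales by `r`.
-/

open Metric Set

noncomputable section

def blaschkeFactor (c : ℝ) (z : ℂ) : ℂ := (z - c) / (1 - c * z)

section BlaschkeFactor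

variable {c : ℝ} {z : ℂ}

lemma normSq_one_sub_mul_sub_normSq_sub (c : ℝ) (z : ℂ) :
    Complex.normSq (1 - c * z) - Complex.normSq (z - c) =
      (1 - c ^ 2) * (1 - Complex.normSq z) := by
  simp only [Complex.normSq_apply, Complex.sub_re, Complex.sub_im, Complex.mul_re,
    Complex.mul_im, Complex.one_re, Complex.one_im, Complex.ofReal_re, Complex.ofReal_im]
  ring

@[simp]
lemma blaschkeFactor_zero (c : ℝ) : blaschkeFactor c 0 = -c := by
  simp [blaschkeFactor]

lemma one_sub_ofReal_mul_ne_zero (hc : |c| < 1) (hz : ‖z‖ ≤ 1) : 1 - c * z ≠ 0 := by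
  intro h
  have hnorm := congrArg norm (sub_eq_zero.mp h)
  rw [norm_one, norm_mul, Complex.norm_real, Real.norm_eq_abs] at hnorm
  nlinarith [abs_nonneg c, norm_nonneg z]

lemma norm_blaschkeFactor_lt_one (hc : |c| < 1) (hz : ‖z‖ < 1) :
    ‖blaschkeFactor c z‖ < 1 := by
  have hden := one_sub_ofReal_mul_ne_zero hc hz.le
  rw [blaschkeFactor, norm_div, div_lt_one (norm_pos_iff.mpr hden)]
  suffices Complex.normSq (z - c) < Complex.normSq (1 - c * z) by
    rw [Complex.normSq_eq_norm_sq, Complex.normSq_eq_norm_sq] at this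
    exact lt_of_pow_lt_pow_left₀ 2 (norm_nonneg _) this
  have hc2 : 0 < 1 - c ^ 2 := by nlinarith [sq_abs c, abs_nonneg c]
  have hz2 : 0 < 1 - Complex.normSq z := by
    rw [Complex.normSq_eq_norm_sq]
    nlinarith [norm_nonneg z]
  linarith [normSq_one_sub_mul_sub_normSq_sub c z, mul_pos hc2 hz2]

lemma blaschkeFactor_neg_blaschkeFactor (hc : |c| < 1) (hz : 1 - c * z ≠ 0) :
    blaschkeFactor (-c) (blaschkeFactor c z) = z := by
  have hc2 : (1 - c ^ 2 : ℂ) ≠ 0 := by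
    exact_mod_cast (show (1 - c ^ 2 : ℝ) ≠ 0 by nlinarith [sq_abs c, abs_nonneg c])
  have hnum : blaschkeFactor c z - (-c : ℝ) = z * (1 - c ^ 2) / (1 - c * z) := by
    rw [blaschkeFactor, eq_div_iff hz, sub_mul, div_mul_cancel₀ _ hz]
    push_cast
    ring
  have hden : 1 - (-c : ℝ) * blaschkeFactor c z = (1 - c ^ 2) / (1 - c * z) := by
    rw [blaschkeFactor, eq_div_iff hz, sub_mul, mul_assoc, div_mul_cancel₀ _ hz]
    push_cast
    ring
  rw [blaschkeFactor, hnum, hden, div_div_div_cancel_right₀ hz, mul_div_cancel_right₀ _ hc2]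

lemma bijOn_blaschkeFactor (hc : |c| < 1) :
    BijOn (blaschkeFactor c) (ball 0 1) (ball 0 1) := by
  have hc' : |-c| < 1 := by rwa [abs_neg]
  have hinv : InvOn (blaschkeFactor (-c)) (blaschkeFactor c) (ball 0 1) (ball 0 1) := by
    refine ⟨fun z hz => blaschkeFactor_neg_blaschkeFactor hc ?_, fun w hw => ?_⟩
    · exact one_sub_ofReal_mul_ne_zero hc (mem_ball_zero_iff.mp hz).le
    · simpa using blaschkeFactor_neg_blaschkeFactor hc'
        (one_sub_ofReal_mul_ne_zero hc' (mem_ball_zero_iff.mp hw).le)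
  refine hinv.bijOn (fun z hz => ?_) (fun z hz => ?_) <;> rw [mem_ball_zero_iff] at hz ⊢
  · exact norm_blaschkeFactor_lt_one hc hz
  · exact norm_blaschkeFactor_lt_one hc' hz

lemma hasDerivAt_blaschkeFactor (hz : 1 - c * z ≠ 0) :
    HasDerivAt (blaschkeFactor c) ((1 - c ^ 2) / (1 - c * z) ^ 2) z :=
  (((hasDerivAt_id' z).sub_const (c : ℂ)).div
    (((hasDerivAt_id' z).const_mul (c : ℂ)).const_sub 1) hz).congr_deriv (by ring)

lemma norm_deriv_blaschkeFactor_le (hc : |c| < 1) (hz : ‖z‖ ≤ 1) :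
    ‖deriv (blaschkeFactor c) z‖ ≤ (1 + |c|) / (1 - |c|) := by
  have h1c : 0 < 1 - |c| := by linarith
  have hnum : ‖(1 - c ^ 2 : ℂ)‖ = (1 + |c|) * (1 - |c|) := by
    rw [← Complex.ofReal_one, ← Complex.ofReal_pow, ← Complex.ofReal_sub, Complex.norm_real,
      Real.norm_eq_abs, abs_of_pos (by nlinarith [sq_abs c, abs_nonneg c]), ← sq_abs]
    ring
  have hden : 1 - |c| ≤ ‖1 - c * z‖ :=
    calc 1 - |c| ≤ ‖(1 : ℂ)‖ - ‖(c : ℂ) * z‖ := by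
          rw [norm_one, norm_mul, Complex.norm_real, Real.norm_eq_abs]
          nlinarith [abs_nonneg c]
      _ ≤ ‖1 - c * z‖ := norm_sub_norm_le _ _
  rw [(hasDerivAt_blaschkeFactor (one_sub_ofReal_mul_ne_zero hc hz)).deriv, norm_div, norm_pow,
    hnum, div_le_div_iff₀ (pow_pos (h1c.trans_le hden) 2) h1c]
  nlinarith [pow_le_pow_left₀ h1c.le hden 2, abs_nonneg c]

lemma norm_deriv_blaschkeFactor_one (hc0 : 0 ≤ c) (hc1 : c < 1) :
    ‖deriv (blaschkeFactor c) 1‖ = (1 + c) / (1 - c) := by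
  have hden : (1 - c * 1 : ℂ) ≠ 0 :=
    one_sub_ofReal_mul_ne_zero (by rwa [abs_of_nonneg hc0]) (by simp)
  have h1c : 1 - c ≠ 0 := by linarith
  rw [(hasDerivAt_blaschkeFactor hden).deriv,
    show (1 - c ^ 2 : ℂ) / (1 - c * 1) ^ 2 = ((1 - c ^ 2) / (1 - c) ^ 2 : ℝ) by push_cast; ring,
    Complex.norm_real, Real.norm_of_nonneg (div_nonneg (by nlinarith) (sq_nonneg _))]
  field_simp
  ring

end BlaschkeFactor

lemma bijOn_ofReal_mul_add_ball {r : ℝ} (hr : 0 < r) (a : ℂ) :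
    BijOn (fun w : ℂ => r * w + a) (ball 0 1) (ball a r) := by
  have hr' : (r : ℂ) ≠ 0 := by exact_mod_cast hr.ne'
  have hinv : InvOn (fun v : ℂ => (v - a) / r) (fun w : ℂ => r * w + a) (ball 0 1) (ball a r) :=
    ⟨fun w _ => by field_simp; ring, fun v _ => by field_simp; ring⟩
  refine hinv.bijOn (fun w hw => ?_) (fun v hv => ?_)
  · rw [mem_ball_zero_iff] at hw
    rw [mem_ball_iff_norm, add_sub_cancel_right, norm_mul, Complex.norm_real,
      Real.norm_of_nonneg hr.le]
    nlinarith
  · rw [mem_ball_iff_norm] at hv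
    rw [mem_ball_zero_iff, norm_div, Complex.norm_real, Real.norm_of_nonneg hr.le,
      div_lt_one hr]
    exact hv

end

theorem stmt9 (a r : ℝ) (ha : 0 ≤ a) (har : a < r)
    (f : ℂ → ℂ)
    (hf : f = fun z => (r : ℂ) * ((z - (a / r : ℝ)) / (1 - (a / r : ℝ) * z)) + (a : ℂ)) :
    Set.BijOn f (ball (0 : ℂ) 1) (ball (a : ℂ) r) ∧
      f 0 = 0 ∧
      DifferentiableOn ℂ f (ball (0 : ℂ) 1) ∧
      (∀ z ∈ ball (0 : ℂ) 1, ‖deriv f z‖ ≤ r * (r + a) / (r - a)) ∧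
      DifferentiableAt ℂ f 1 ∧
      ‖deriv f 1‖ = r * (r + a) / (r - a) := by
  have hr : 0 < r := ha.trans_lt har
  have hc0 : 0 ≤ a / r := div_nonneg ha hr.le
  have hc1 : a / r < 1 := (div_lt_one hr).2 har
  have hc : |a / r| < 1 := by rwa [abs_of_nonneg hc0]
  have hf' : f = fun z => r * blaschkeFactor (a / r) z + a := hf
  have hderiv : ∀ z : ℂ, ‖z‖ ≤ 1 →
      HasDerivAt f (r * deriv (blaschkeFactor (a / r)) z) z := fun z hz =>
    hf' ▸ ((hasDerivAt_blaschkeFactor (one_sub_ofReal_mul_ne_zero hc hz)).differentiableAt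
      |>.hasDerivAt.const_mul (r : ℂ)).add_const (a : ℂ)
  have hnorm : ∀ z : ℂ, ‖z‖ ≤ 1 →
      ‖deriv f z‖ = r * ‖deriv (blaschkeFactor (a / r)) z‖ := fun z hz => by
    rw [(hderiv z hz).deriv, norm_mul, Complex.norm_real, Real.norm_of_nonneg hr.le]
  have hbound : r * ((1 + a / r) / (1 - a / r)) = r * (r + a) / (r - a) := by
    have : r - a ≠ 0 := by linarith
    field_simp
  refine ⟨hf' ▸ (bijOn_ofReal_mul_add_ball hr a).comp (bijOn_blaschkeFactor hc), ?_,
    fun z hz => (hderiv z (mem_ball_zero_iff.mp hz).le).differentiableAt.differentiableWithinAt,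
    fun z hz => ?_, (hderiv 1 (by simp)).differentiableAt, ?_⟩
  · simp only [hf', blaschkeFactor_zero, Complex.ofReal_div, mul_neg,
      mul_div_cancel₀ _ (Complex.ofReal_ne_zero.mpr hr.ne'), neg_add_cancel]
  · rw [hnorm z (mem_ball_zero_iff.mp hz).le, ← hbound]
    gcongr
    simpa only [abs_of_nonneg hc0] using
      norm_deriv_blaschkeFactor_le hc (mem_ball_zero_iff.mp hz).le
  · rw [hnorm 1 (by simp), norm_deriv_blaschkeFactor_one hc0 hc1, hbound]
end
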